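/- arXiv:1501.00739 — 4 statements merged into one kernel-verified Lean document; each statement's English description precedes it below -/
import Mathlib

section
/- Core drift inequality for the inversion count (Lemma 3 of the paper, under the attraction assumption (A4a)): Let x ∈ 𝒮_hgt with interface y. Assume (i) there is s̄ > 0 such that p_k(x) + q_k(x) ≥ s̄ for every half-integer k with x_{k−1} ≠ x_k; (ii) p_k(x) + q_k(x) ≤ 1 for every half-integer k; (iii) (A4a) for all half-integers k < l such that x_{k−1} ≠ x_k, x_{l−1} ≠ x_l and x is constant on {k, k+1, …, l−1}, one has p_k(x) + q_l(x) ≥ q_k(x) + p_l(x); (iv) there is d̄ ≥ 0 such that ch(y)·(Σ_{i: y_i = +1} b⊕_i(y) − Σ_{i: y_i = −1} b⊖_i(y)) ≤ d̄·|y|. Then for all α₁, α₂ ≥ 0: α₁·(G^flip f_CD)(x) + α₂·(G^excl f_CD)(x) ≤ α₁·s̄ − (α₁·s̄/2 − α₂·d̄)·|y|. -/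
open scoped BigOperators

/- Half-integers `k ∈ ℤ + 1/2` are represented by integers `j`, via `k = j + 1/2`.
A height configuration is a function `x : ℤ → ℤ` with values in `{0,1}`,
eventually constant in both directions with different limiting values. -/
def IsHeight (x : ℤ → ℤ) : Prop :=
  (∀ k, x k = 0 ∨ x k = 1) ∧
  ∃ a b : ℤ, a ≠ b ∧ (∃ N : ℤ, ∀ k ≤ N, x k = a) ∧ (∃ M : ℤ, ∀ k, M ≤ k → x k = b)

/-- The interface of a height configuration: `y i = x (i+1/2) - x (i-1/2)`. -/
def itf (x : ℤ → ℤ) : ℤ → ℤ := fun i => x i - x (i - 1)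

/-- The charge of a particle configuration. -/
noncomputable def charge (y : ℤ → ℤ) : ℤ := ∑ᶠ i, y i

/-- The particle number of a particle configuration. -/
noncomputable def pnum (y : ℤ → ℤ) : ℤ := ∑ᶠ i, |y i|

/-- `κ = (1 + ch(y))/2`. -/
noncomputable def kappa (x : ℤ → ℤ) : ℤ := (1 + charge (itf x)) / 2

/-- The inversion count `f_CD`. -/
noncomputable def fCD (x : ℤ → ℤ) : ℕ :=
  Nat.card {p : ℤ × ℤ // p.1 < p.2 ∧ x p.1 = kappa x ∧ x p.2 = 1 - kappa x}

/-- Flip the height at position `k`. -/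
def flipAt (x : ℤ → ℤ) (k : ℤ) : ℤ → ℤ := Function.update x k (1 - x k)

/-- Interchange the heights at positions `k` and `k+1`. -/
def swapAt (x : ℤ → ℤ) (k : ℤ) : ℤ → ℤ :=
  fun j => if j = k then x (k + 1) else if j = k + 1 then x k else x j

/-- `S(k) = Σ_{l<k} 1{x_l = κ} − Σ_{l>k} 1{x_l = 1−κ}`. -/
noncomputable def Sfun (x : ℤ → ℤ) (k : ℤ) : ℤ :=
  (Nat.card {l : ℤ // l < k ∧ x l = kappa x} : ℤ)
    - (Nat.card {l : ℤ // k < l ∧ x l = 1 - kappa x} : ℤ)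

/-- The spin-flip part of the generator applied to `f_CD`. -/
noncomputable def Gflip (p q : ℤ → ℝ) (x : ℤ → ℤ) : ℝ :=
  ∑ᶠ k : ℤ, (p k + q (k + 1)) * ((fCD (flipAt x k) : ℝ) - (fCD x : ℝ))

/-- The exclusion part of the generator applied to `f_CD`. -/
noncomputable def Gexcl (bp bm : ℤ → ℝ) (x : ℤ → ℤ) : ℝ :=
  ∑ᶠ k : ℤ,
    ((if x k = 0 ∧ x (k + 1) = 1 then bp (k + 1) else 0)
      + (if x k = 1 ∧ x (k + 1) = 0 then bm (k + 1) else 0))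
    * ((fCD (swapAt x k) : ℝ) - (fCD x : ℝ))

/-! Write `x = heightOf b A`, equal to `b = κ` on `A` and to `1 - b` off `A`; then `f_CD` counts
the pairs `k < l` with `k ∈ A`, `l ∉ A`. Flipping site `k` changes this count by
`±(#{l < k | l ∈ A} - #{l > k | l ∉ A})`, and swapping `k, k + 1` changes it by `y_{k+1} ch(y)`.

Hence the exclusion part equals `ch(y) (Σ b⊕ - Σ b⊖)` exactly, and (iv) bounds it by `d̄ |y|`.
Grouping the flip terms by particles, the flip part becomes
`Σ_k (p_k - q_k) g_k - Σ_{k ∉ A} (p_k + q_k)` (sums over particles), where the partial sums of `g`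
up to `j` are minus the number of inversions containing `j`: nonpositive, and zero past the last
particle. By (A4a) `p - q` decreases from one particle to the next, so Abel summation makes the
first sum nonpositive, while the second is at least `s̄` times the number `(|y| - 1) / 2` of
particles outside `A`. -/

open Set
open scoped Finset

theorem Finset.sum_filter_le_telescope {G : Type*} [AddCommGroup G] {s : Finset ℤ} {F : ℤ → G}
    {N : ℤ} (hs : ∀ k ∈ s, N < k) (hF : ∀ k ∉ s, F k = F (k - 1)) {j : ℤ} (hj : N ≤ j) :
    ∑ k ∈ s with k ≤ j, (F k - F (k - 1)) = F j - F N := by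
  induction j, hj using Int.leInduction with
  | base =>
    rw [sub_self, Finset.sum_eq_zero]
    intro k hk
    rw [Finset.mem_filter] at hk
    exact absurd (hs k hk.1) (not_lt.2 hk.2)
  | succ j hj ih =>
    by_cases hj₁ : j + 1 ∈ s
    · rw [show {k ∈ s | k ≤ j + 1} = insert (j + 1) {k ∈ s | k ≤ j} by ext; simp; grind,
        Finset.sum_insert (by simp), ih, add_sub_cancel_right]
      abel
    · rw [show {k ∈ s | k ≤ j + 1} = {k ∈ s | k ≤ j} by ext; simp; grind, ih, hF _ hj₁,
        add_sub_cancel_right]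

theorem eq_of_forall_sub_one_eq {β : Type*} {x : ℤ → β} {k l : ℤ}
    (h : ∀ m, k < m → m < l → x (m - 1) = x m) : ∀ m, k ≤ m → m < l → x m = x k := by
  intro m hm
  induction m, hm using Int.leInduction with
  | base => exact fun _ => rfl
  | succ m hm ih =>
    intro hml
    rw [← h (m + 1) (by omega) hml, add_sub_cancel_right, ih (by omega)]

theorem finsum_add_shift_mul_eq_sum {R : Type*} [NonUnitalNonAssocSemiring R]
    {p q D : ℤ → R} {s : Finset ℤ} (hp : Function.support p ⊆ s) (hq : Function.support q ⊆ s) :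
    ∑ᶠ k, (p k + q (k + 1)) * D k = ∑ k ∈ s, (p k * D k + q k * D (k - 1)) := by
  have hpD : Function.support (fun k => p k * D k) ⊆ s :=
    (Function.support_mul_subset_left _ _).trans hp
  have hqD : Function.support (fun k => q k * D (k - 1)) ⊆ s :=
    (Function.support_mul_subset_left _ _).trans hq
  have hqD' : Function.HasFiniteSupport (fun k => q (k + 1) * D k) :=
    (s.finite_toSet.preimage (add_left_injective 1).injOn).subset
      fun k hk => hq (left_ne_zero_of_mul hk)
  have hshift : ∑ᶠ k, q (k + 1) * D k = ∑ᶠ k, q k * D (k - 1) := by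
    simpa using finsum_comp_equiv (Equiv.addRight (1 : ℤ)) (f := fun k => q k * D (k - 1))
  simp only [add_mul]
  rw [finsum_add_distrib (s.finite_toSet.subset hpD) hqD', hshift,
    finsum_eq_sum_of_support_subset _ hpD, finsum_eq_sum_of_support_subset _ hqD,
    Finset.sum_add_distrib]

section Abel

variable {α R : Type*} [LinearOrder α] [CommRing R] [LinearOrder R] [IsStrictOrderedRing R]

theorem Finset.sum_mul_le_mul_sum_of_partialSums_nonpos {s : Finset α} {c g : α → R}
    (hc : ∀ k ∈ s, ∀ l ∈ s, k < l → (∀ m ∈ s, m ≤ k ∨ l ≤ m) → c l ≤ c k)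
    (hg : ∀ j ∈ s, ∑ k ∈ s with k ≤ j, g k ≤ 0) {a : α} (ha : a ∈ s) (ha_max : ∀ k ∈ s, k ≤ a) :
    ∑ k ∈ s, c k * g k ≤ c a * ∑ k ∈ s, g k := by
  induction s using Finset.induction_on_max generalizing a with
  | empty => simp at ha
  | insert a' t ht ih =>
    obtain rfl : a = a' := by
      rcases Finset.mem_insert.1 ha with h | h
      · exact h
      · exact absurd (ha_max a' (Finset.mem_insert_self _ _)) (not_le.2 (ht a h))
    have hat : a ∉ t := fun h => lt_irrefl a (ht a h)
    rw [Finset.sum_insert hat, Finset.sum_insert hat]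
    rcases t.eq_empty_or_nonempty with rfl | hne
    · simp
    set a'' := t.max' hne
    have hfilter : ∀ j ∈ t, {k ∈ insert a t | k ≤ j} = {k ∈ t | k ≤ j} := fun j hj => by
      rw [Finset.filter_insert, if_neg (not_le.2 (ht j hj))]
    have hIH := ih (fun k hk l hl hkl hcons => hc k (Finset.mem_insert_of_mem hk) l
        (Finset.mem_insert_of_mem hl) hkl fun m hm => (Finset.mem_insert.1 hm).elim
          (fun h => Or.inr (h ▸ (ht l hl).le)) (hcons m))
      (fun j hj => hfilter j hj ▸ hg j (Finset.mem_insert_of_mem hj))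
      (t.max'_mem hne) (fun k hk => t.le_max' k hk)
    have hca : c a ≤ c a'' := hc a'' (Finset.mem_insert_of_mem (t.max'_mem hne)) a
      (Finset.mem_insert_self _ _) (ht _ (t.max'_mem hne)) fun m hm =>
        (Finset.mem_insert.1 hm).elim (fun h => Or.inr h.ge) (fun h => Or.inl (t.le_max' m h))
    have hGt : ∑ k ∈ t, g k ≤ 0 := by
      have := hg a'' (Finset.mem_insert_of_mem (t.max'_mem hne))
      rwa [hfilter a'' (t.max'_mem hne),
        Finset.filter_true_of_mem fun k hk => t.le_max' k hk] at this
    nlinarith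

theorem Finset.sum_mul_nonpos_of_partialSums_nonpos {s : Finset α} {c g : α → R}
    (hc : ∀ k ∈ s, ∀ l ∈ s, k < l → (∀ m ∈ s, m ≤ k ∨ l ≤ m) → c l ≤ c k)
    (hg : ∀ j ∈ s, ∑ k ∈ s with k ≤ j, g k ≤ 0) (hg₀ : ∑ k ∈ s, g k = 0) :
    ∑ k ∈ s, c k * g k ≤ 0 := by
  rcases s.eq_empty_or_nonempty with rfl | hs
  · simp
  · simpa [hg₀] using Finset.sum_mul_le_mul_sum_of_partialSums_nonpos hc hg (s.max'_mem hs)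
      fun k hk => s.le_max' k hk

end Abel
section Inversions

open scoped Classical

variable {A B : Set ℤ} {k : ℤ}

def inversions (A : Set ℤ) : Set (ℤ × ℤ) := {p | p.1 < p.2 ∧ p.1 ∈ A ∧ p.2 ∉ A}

theorem finite_inter_Iio (hA : BddBelow A) (k : ℤ) : (A ∩ Iio k).Finite :=
  (hA.mono inter_subset_left).finite_of_bddAbove ⟨k, fun _ h => h.2.le⟩

theorem finite_compl_inter_Ioi (hAc : BddAbove Aᶜ) (k : ℤ) : (Aᶜ ∩ Ioi k).Finite :=
  BddBelow.finite_of_bddAbove ⟨k, fun _ h => h.2.le⟩ (hAc.mono inter_subset_left)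

theorem finite_inversions (hA : BddBelow A) (hAc : BddAbove Aᶜ) : (inversions A).Finite := by
  obtain ⟨N, hN⟩ := hA
  obtain ⟨M, hM⟩ := hAc
  refine ((finite_Icc N M).prod (finite_Icc N M)).subset ?_
  rintro ⟨i, j⟩ ⟨hij, hi, hj⟩
  have := hN hi
  have := hM hj
  simp only [mem_prod, mem_Icc]
  omega

theorem ncard_inter_Iio_add_one (hA : BddBelow A) (k : ℤ) :
    (A ∩ Iio (k + 1)).ncard = (A ∩ Iio k).ncard + if k ∈ A then 1 else 0 := by
  split_ifs with hk
  · rw [show A ∩ Iio (k + 1) = insert k (A ∩ Iio k) by ext; simp; grind,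
      ncard_insert_of_notMem (by simp) (finite_inter_Iio hA k)]
  · rw [show A ∩ Iio (k + 1) = A ∩ Iio k by ext; simp; grind, add_zero]

theorem ncard_compl_inter_Ioi_eq_add (hAc : BddAbove Aᶜ) (k : ℤ) :
    (Aᶜ ∩ Ioi k).ncard = (Aᶜ ∩ Ioi (k + 1)).ncard + if k + 1 ∈ A then 0 else 1 := by
  split_ifs with hk
  · rw [show Aᶜ ∩ Ioi k = Aᶜ ∩ Ioi (k + 1) by ext; simp; grind, add_zero]
  · rw [show Aᶜ ∩ Ioi k = insert (k + 1) (Aᶜ ∩ Ioi (k + 1)) by ext; simp; grind,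
      ncard_insert_of_notMem (by simp) (finite_compl_inter_Ioi hAc _)]

theorem ncard_inversions_insert (hA : BddBelow A) (hAc : BddAbove Aᶜ) (hk : k ∉ A) :
    (inversions (insert k A)).ncard + (A ∩ Iio k).ncard
      = (inversions A).ncard + (Aᶜ ∩ Ioi k).ncard := by
  have hunion : inversions (insert k A) ∪ (A ∩ Iio k) ×ˢ {k}
      = inversions A ∪ {k} ×ˢ (Aᶜ ∩ Ioi k) := by
    ext ⟨i, j⟩
    simp only [inversions, mem_union, mem_ofPred_eq, mem_insert_iff, mem_prod, mem_inter_iff,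
      mem_Iio, mem_singleton_iff, mem_compl_iff, mem_Ioi]
    grind
  have hins := finite_inversions (hA.insert k) (hAc.mono (compl_subset_compl.2 (subset_insert k A)))
  have := congrArg ncard hunion
  rwa [ncard_union_eq _ hins ((finite_inter_Iio hA k).prod (finite_singleton k)),
    ncard_union_eq _ (finite_inversions hA hAc)
      ((finite_singleton k).prod (finite_compl_inter_Ioi hAc k)),
    ncard_prod, ncard_prod, ncard_singleton, mul_one, one_mul] at this
  all_goals exact disjoint_left.2 fun p hp hp' => by simp_all [inversions]

theorem ncard_inversions_insert_add_one (hA : BddBelow B) (hAc : BddAbove Bᶜ) (hk : k ∉ B)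
    (hk₁ : k + 1 ∉ B) :
    (inversions (insert (k + 1) B)).ncard + 1 = (inversions (insert k B)).ncard := by
  have h₀ := ncard_inversions_insert hA hAc hk
  have h₁ := ncard_inversions_insert hA hAc hk₁
  have hW := ncard_inter_Iio_add_one hA k
  have hR := ncard_compl_inter_Ioi_eq_add hAc k
  simp only [hk, hk₁, if_false] at hW hR
  omega

end Inversions

section Heights

open scoped Classical

variable {b : ℤ} {A B : Set ℤ} {k l N M : ℤ}

noncomputable def heightOf (b : ℤ) (A : Set ℤ) : ℤ → ℤ := fun l => if l ∈ A then b else 1 - b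

theorem heightOf_eq_iff : heightOf b A l = b ↔ l ∈ A := by
  by_cases h : l ∈ A <;> simp [heightOf, h]; omega

theorem heightOf_eq_one_sub_iff : heightOf b A l = 1 - b ↔ l ∉ A := by
  by_cases h : l ∈ A <;> simp [heightOf, h]; omega

theorem heightOf_eq_heightOf_iff : heightOf b A k = heightOf b A l ↔ (k ∈ A ↔ l ∈ A) := by
  by_cases hk : k ∈ A <;> by_cases hl : l ∈ A <;> simp [heightOf, hk, hl] <;> omega

theorem bddBelow_of_forall_le_notMem (hN : ∀ k ≤ N, k ∉ A) : BddBelow A :=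
  ⟨N + 1, fun k hk => by by_contra h; exact hN k (by omega) hk⟩

theorem bddAbove_compl_of_forall_le_mem (hM : ∀ k, M ≤ k → k ∈ A) : BddAbove Aᶜ :=
  ⟨M - 1, fun k hk => by by_contra h; exact hk (hM k (by omega))⟩

theorem exists_forall_le_notMem_and_forall_le_mem (hA : BddBelow A) (hAc : BddAbove Aᶜ) :
    ∃ N M, (∀ k ≤ N, k ∉ A) ∧ ∀ k, M ≤ k → k ∈ A := by
  obtain ⟨N, hN⟩ := hA
  obtain ⟨M, hM⟩ := hAc
  exact ⟨N - 1, M + 1, fun k hk h => by have := hN h; omega,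
    fun k hk => by by_contra h; have := hM h; omega⟩

theorem BddAbove.compl_of_insert (h : BddAbove (insert k B)ᶜ) : BddAbove Bᶜ :=
  (h.insert k).mono fun j hj => by by_cases hjk : j = k <;> simp_all

noncomputable def particles (A : Set ℤ) (N M : ℤ) : Finset ℤ :=
  {k ∈ Finset.Ioc N M | ¬ (k - 1 ∈ A ↔ k ∈ A)}

theorem mem_particles (hN : ∀ k ≤ N, k ∉ A) (hM : ∀ k, M ≤ k → k ∈ A) :
    k ∈ particles A N M ↔ ¬ (k - 1 ∈ A ↔ k ∈ A) := by
  simp only [particles, Finset.mem_filter, Finset.mem_Ioc, and_iff_right_iff_imp]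
  intro h
  constructor
  · by_contra h'
    exact h (iff_of_false (hN _ (by omega)) (hN _ (by omega)))
  · by_contra h'
    exact h (iff_of_true (hM _ (by omega)) (hM _ (by omega)))

theorem sum_particles_sub {G : Type*} [AddCommGroup G] (hN : ∀ k ≤ N, k ∉ A)
    (hM : ∀ k, M ≤ k → k ∈ A) {F : ℤ → G} (hF : ∀ k, (k - 1 ∈ A ↔ k ∈ A) → F k = F (k - 1)) :
    ∑ k ∈ particles A N M, (F k - F (k - 1)) = F M - F N := by
  have hNM : N ≤ M := by by_contra h; exact hN M (by omega) (hM M le_rfl)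
  have hle : {k ∈ particles A N M | k ≤ M} = particles A N M :=
    Finset.filter_true_of_mem fun k hk => (Finset.mem_Ioc.1 (Finset.mem_filter.1 hk).1).2
  rw [← hle]
  exact Finset.sum_filter_le_telescope
    (fun k hk => (Finset.mem_Ioc.1 (Finset.mem_filter.1 hk).1).1)
    (fun k hk => hF k (not_not.1 fun h => hk ((mem_particles hN hM).2 h))) hNM

theorem support_itf_heightOf_subset (hN : ∀ k ≤ N, k ∉ A) (hM : ∀ k, M ≤ k → k ∈ A) :
    Function.support (itf (heightOf b A)) ⊆ particles A N M := fun k hk => by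
  rw [Finset.mem_coe, mem_particles hN hM, ← heightOf_eq_heightOf_iff (b := b)]
  exact fun h => hk (by simp [itf, h])

theorem charge_itf_heightOf (hN : ∀ k ≤ N, k ∉ A) (hM : ∀ k, M ≤ k → k ∈ A) :
    charge (itf (heightOf b A)) = 2 * b - 1 := by
  rw [charge, finsum_eq_sum_of_support_subset _ (support_itf_heightOf_subset hN hM)]
  rw [show ∑ k ∈ particles A N M, itf (heightOf b A) k
      = ∑ k ∈ particles A N M, (heightOf b A k - heightOf b A (k - 1)) from rfl,
    sum_particles_sub hN hM fun k hk => heightOf_eq_heightOf_iff.2 hk.symm,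
    heightOf_eq_iff.2 (hM M le_rfl), heightOf_eq_one_sub_iff.2 (hN N le_rfl)]
  ring

theorem pnum_itf_heightOf (hb : b = 0 ∨ b = 1) (hN : ∀ k ≤ N, k ∉ A)
    (hM : ∀ k, M ≤ k → k ∈ A) : pnum (itf (heightOf b A)) = #(particles A N M) := by
  rw [pnum, finsum_eq_sum_of_support_subset _ (by simpa using support_itf_heightOf_subset hN hM),
    Finset.card_eq_sum_ones, Nat.cast_sum, Nat.cast_one]
  refine Finset.sum_congr rfl fun k hk => ?_
  have := (mem_particles hN hM).1 hk
  rcases hb with rfl | rfl <;> by_cases hk : k ∈ A <;> simp_all [itf, heightOf]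

theorem card_particles (hN : ∀ k ≤ N, k ∉ A) (hM : ∀ k, M ≤ k → k ∈ A) :
    #(particles A N M) = 2 * #{k ∈ particles A N M | k ∉ A} + 1 := by
  have hsum := sum_particles_sub (G := ℤ) (F := fun k => if k ∈ A then 1 else 0) hN hM
    fun k hk => by simp [hk]
  have hterm : ∀ k ∈ particles A N M,
      ((if k ∈ A then 1 else 0) - if k - 1 ∈ A then 1 else 0 : ℤ) = if k ∈ A then 1 else -1 :=
    fun k hk => by have := (mem_particles hN hM).1 hk; by_cases k ∈ A <;> simp_all
  rw [Finset.sum_congr rfl hterm, Finset.sum_ite, if_pos (hM M le_rfl), if_neg (hN N le_rfl)]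
    at hsum
  have hcard := Finset.card_filter_add_card_filter_not (s := particles A N M) (· ∈ A)
  simp only [Finset.sum_const, nsmul_eq_mul, mul_one, mul_neg] at hsum
  omega

end Heights

section InversionCount

open scoped Classical

variable {b : ℤ} {A B : Set ℤ} {k : ℤ}

theorem kappa_heightOf (hA : BddBelow A) (hAc : BddAbove Aᶜ) : kappa (heightOf b A) = b := by
  obtain ⟨N, M, hN, hM⟩ := exists_forall_le_notMem_and_forall_le_mem hA hAc
  rw [kappa, charge_itf_heightOf hN hM]
  omega

theorem fCD_heightOf (hA : BddBelow A) (hAc : BddAbove Aᶜ) :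
    fCD (heightOf b A) = (inversions A).ncard := by
  rw [fCD, kappa_heightOf hA hAc, ← Nat.card_coe_set_eq]
  simp only [heightOf_eq_iff, heightOf_eq_one_sub_iff]
  rfl

theorem flipAt_heightOf_of_notMem (hk : k ∉ A) :
    flipAt (heightOf b A) k = heightOf b (insert k A) := by
  funext l
  by_cases hl : l = k <;> simp [flipAt, heightOf, hl, hk]

theorem flipAt_heightOf_insert (hk : k ∉ B) :
    flipAt (heightOf b (insert k B)) k = heightOf b B := by
  funext l
  by_cases hl : l = k <;> simp [flipAt, heightOf, hl, hk]

theorem fCD_flipAt_heightOf_sub (hA : BddBelow A) (hAc : BddAbove Aᶜ) (k : ℤ) :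
    (fCD (flipAt (heightOf b A) k) : ℝ) - fCD (heightOf b A)
      = if k ∈ A then ((A ∩ Iio k).ncard : ℝ) - (Aᶜ ∩ Ioi k).ncard
        else ((Aᶜ ∩ Ioi k).ncard : ℝ) - (A ∩ Iio k).ncard := by
  split_ifs with hk
  · obtain ⟨B, hkB, rfl⟩ : ∃ B, k ∉ B ∧ A = insert k B := ⟨A \ {k}, by simp, by simp [hk]⟩
    have hB := hA.mono (subset_insert k B)
    have hBc := hAc.compl_of_insert
    have h := ncard_inversions_insert hB hBc hkB
    rw [show insert k B ∩ Iio k = B ∩ Iio k by ext; simp; grind,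
      show (insert k B)ᶜ ∩ Ioi k = Bᶜ ∩ Ioi k by ext; simp; grind,
      flipAt_heightOf_insert hkB, fCD_heightOf hB hBc, fCD_heightOf hA hAc]
    have h' : ((inversions (insert k B)).ncard : ℝ) + (B ∩ Iio k).ncard
        = (inversions B).ncard + (Bᶜ ∩ Ioi k).ncard := by exact_mod_cast h
    linarith
  · have hA' := hA.insert k
    have hAc' := hAc.mono (compl_subset_compl.2 (subset_insert k A))
    have h := ncard_inversions_insert hA hAc hk
    rw [flipAt_heightOf_of_notMem hk, fCD_heightOf hA' hAc', fCD_heightOf hA hAc]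
    have h' : ((inversions (insert k A)).ncard : ℝ) + (A ∩ Iio k).ncard
        = (inversions A).ncard + (Aᶜ ∩ Ioi k).ncard := by exact_mod_cast h
    linarith

theorem swapAt_heightOf_of_iff (h : k ∈ A ↔ k + 1 ∈ A) :
    swapAt (heightOf b A) k = heightOf b A := by
  funext j
  simp only [swapAt, heightOf]
  split_ifs <;> grind

theorem swapAt_heightOf_insert (hk : k ∉ B) (hk₁ : k + 1 ∉ B) :
    swapAt (heightOf b (insert k B)) k = heightOf b (insert (k + 1) B) := by
  funext j
  simp only [swapAt, heightOf, mem_insert_iff]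
  split_ifs <;> grind

theorem swapAt_heightOf_insert_add_one (hk : k ∉ B) (hk₁ : k + 1 ∉ B) :
    swapAt (heightOf b (insert (k + 1) B)) k = heightOf b (insert k B) := by
  funext j
  simp only [swapAt, heightOf, mem_insert_iff]
  split_ifs <;> grind

theorem fCD_swapAt_heightOf_sub (hA : BddBelow A) (hAc : BddAbove Aᶜ) (k : ℤ) :
    (fCD (swapAt (heightOf b A) k) : ℝ) - fCD (heightOf b A)
      = (if k + 1 ∈ A then 1 else 0) - if k ∈ A then 1 else 0 := by
  by_cases h : k ∈ A ↔ k + 1 ∈ A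
  · rw [swapAt_heightOf_of_iff h]
    by_cases hk : k ∈ A
    · simp [hk, h.1 hk]
    · simp [hk, mt h.2 hk]
  by_cases hk : k ∈ A
  · have hk₁ : k + 1 ∉ A := fun h₁ => h (iff_of_true hk h₁)
    obtain ⟨B, hkB, rfl⟩ : ∃ B, k ∉ B ∧ A = insert k B := ⟨A \ {k}, by simp, by simp [hk]⟩
    have hk₁B : k + 1 ∉ B := fun h₁ => hk₁ (mem_insert_of_mem k h₁)
    have hB := hA.mono (subset_insert k B)
    have hBc := hAc.compl_of_insert
    rw [swapAt_heightOf_insert hkB hk₁B, fCD_heightOf (hB.insert _) (hBc.mono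
      (compl_subset_compl.2 (subset_insert _ B))), fCD_heightOf hA hAc, if_neg hk₁, if_pos hk,
      ← ncard_inversions_insert_add_one hB hBc hkB hk₁B]
    push_cast
    ring
  · have hk₁ : k + 1 ∈ A := by tauto
    obtain ⟨B, hkB, rfl⟩ : ∃ B, k + 1 ∉ B ∧ A = insert (k + 1) B :=
      ⟨A \ {k + 1}, by simp, by simp [hk₁]⟩
    have hk₀B : k ∉ B := fun h₀ => hk (mem_insert_of_mem _ h₀)
    have hB := hA.mono (subset_insert _ B)
    have hBc := hAc.compl_of_insert
    rw [swapAt_heightOf_insert_add_one hk₀B hkB, fCD_heightOf (hB.insert _) (hBc.mono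
      (compl_subset_compl.2 (subset_insert _ B))), fCD_heightOf hA hAc, if_pos hk₁, if_neg hk,
      ← ncard_inversions_insert_add_one hB hBc hk₀B hkB]
    push_cast
    ring

end InversionCount

section SpinFlip

open scoped Classical

variable {b : ℤ} {A : Set ℤ} {k N M : ℤ}

/-- The number of inversions of `A` containing `j`. -/
noncomputable def invDegree (A : Set ℤ) (j : ℤ) : ℕ :=
  if j ∈ A then (Aᶜ ∩ Ioi j).ncard else (A ∩ Iio j).ncard

theorem invDegree_sub_one (hA : BddBelow A) (hAc : BddAbove Aᶜ) (h : k - 1 ∈ A ↔ k ∈ A) :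
    invDegree A (k - 1) = invDegree A k := by
  have hW := ncard_inter_Iio_add_one hA (k - 1)
  have hR := ncard_compl_inter_Ioi_eq_add hAc (k - 1)
  simp only [sub_add_cancel] at hW hR
  by_cases hk : k ∈ A
  · simp [invDegree, hk, h.2 hk, hR]
  · simp [invDegree, hk, mt h.1 hk, hW]

theorem invDegree_of_le (hN : ∀ k ≤ N, k ∉ A) {j : ℤ} (hj : j ≤ N) : invDegree A j = 0 := by
  rw [invDegree, if_neg (hN j hj), ncard_eq_zero (finite_inter_Iio
    (bddBelow_of_forall_le_notMem hN) j)]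
  exact eq_empty_of_forall_notMem fun l hl => hN l (by have := hl.2; simp at this; omega) hl.1

theorem invDegree_of_ge (hM : ∀ k, M ≤ k → k ∈ A) {j : ℤ} (hj : M ≤ j) : invDegree A j = 0 := by
  rw [invDegree, if_pos (hM j hj), ncard_eq_zero (finite_compl_inter_Ioi
    (bddAbove_compl_of_forall_le_mem hM) j)]
  exact eq_empty_of_forall_notMem fun l hl => hl.1 (hM l (by have := hl.2; simp at this; omega))

theorem flip_contribution_heightOf (hA : BddBelow A) (hAc : BddAbove Aᶜ)
    (hk : ¬ (k - 1 ∈ A ↔ k ∈ A)) (p q : ℝ) :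
    p * ((fCD (flipAt (heightOf b A) k) : ℝ) - fCD (heightOf b A))
        + q * ((fCD (flipAt (heightOf b A) (k - 1)) : ℝ) - fCD (heightOf b A))
      = (p - q) * ((invDegree A (k - 1) : ℝ) - invDegree A k) - if k ∉ A then p + q else 0 := by
  have hW := ncard_inter_Iio_add_one hA (k - 1)
  have hR := ncard_compl_inter_Ioi_eq_add hAc (k - 1)
  simp only [sub_add_cancel] at hW hR
  rw [fCD_flipAt_heightOf_sub hA hAc, fCD_flipAt_heightOf_sub hA hAc]
  by_cases hk' : k ∈ A
  · have hk₁ : k - 1 ∉ A := fun h => hk (iff_of_true h hk')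
    simp only [invDegree, hk', hk₁, if_true, if_false, add_zero, not_true_eq_false, sub_zero]
      at hW hR ⊢
    rw [hW, hR]
    ring
  · have hk₁ : k - 1 ∈ A := by tauto
    simp only [invDegree, hk', hk₁, if_true, if_false, not_false_eq_true] at hW hR ⊢
    rw [hW, hR]
    push_cast
    ring

theorem sum_particles_filter_le_invDegree (hN : ∀ k ≤ N, k ∉ A) (hM : ∀ k, M ≤ k → k ∈ A)
    {j : ℤ} (hj : N ≤ j) :
    ∑ k ∈ particles A N M with k ≤ j, ((invDegree A (k - 1) : ℝ) - invDegree A k)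
      = -invDegree A j := by
  have := Finset.sum_filter_le_telescope (s := particles A N M) (F := fun j => -(invDegree A j : ℝ))
    (fun k hk => (Finset.mem_Ioc.1 (Finset.filter_subset _ _ hk)).1) (fun k hk => by
      rw [invDegree_sub_one (bddBelow_of_forall_le_notMem hN) (bddAbove_compl_of_forall_le_mem hM)
        (not_not.1 fun h => hk ((mem_particles hN hM).2 h))]) hj
  simpa only [neg_sub_neg, invDegree_of_le hN le_rfl, Nat.cast_zero, neg_zero, sub_zero]
    using this

theorem Gflip_heightOf_le (hN : ∀ k ≤ N, k ∉ A) (hM : ∀ k, M ≤ k → k ∈ A) {p q : ℤ → ℝ}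
    {sbar : ℝ} (hrate0 : ∀ k, heightOf b A (k - 1) = heightOf b A k → p k = 0 ∧ q k = 0)
    (hlow : ∀ k, heightOf b A (k - 1) ≠ heightOf b A k → sbar ≤ p k + q k)
    (hA4a : ∀ k l : ℤ, k < l → heightOf b A (k - 1) ≠ heightOf b A k →
      heightOf b A (l - 1) ≠ heightOf b A l →
      (∀ m, k ≤ m → m < l → heightOf b A m = heightOf b A k) → q k + p l ≤ p k + q l) :
    Gflip p q (heightOf b A) ≤ sbar * (1 - #(particles A N M)) / 2 := by
  have hA := bddBelow_of_forall_le_notMem hN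
  have hAc := bddAbove_compl_of_forall_le_mem hM
  have hNM : N ≤ M := by by_contra h; exact hN M (by omega) (hM M le_rfl)
  set P := particles A N M
  have hP : ∀ k, k ∈ P ↔ heightOf b A (k - 1) ≠ heightOf b A k := fun k => by
    rw [mem_particles hN hM, Ne, heightOf_eq_heightOf_iff]
  have hPwin : ∀ k ∈ P, N < k ∧ k ≤ M := fun k hk => Finset.mem_Ioc.1 (Finset.filter_subset _ _ hk)
  have hinv : ∑ k ∈ P, (p k - q k) * ((invDegree A (k - 1) : ℝ) - invDegree A k) ≤ 0 := by
    refine Finset.sum_mul_nonpos_of_partialSums_nonpos (fun k hk l hl hkl hcons => ?_)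
      (fun j hj => ?_) ?_
    · have hconst : ∀ m, k ≤ m → m < l → heightOf b A m = heightOf b A k :=
        eq_of_forall_sub_one_eq fun m hkm hml => by
          by_contra h
          rcases hcons m ((hP m).2 h) with h' | h' <;> omega
      linarith [hA4a k l hkl ((hP k).1 hk) ((hP l).1 hl) hconst]
    · rw [sum_particles_filter_le_invDegree hN hM (hPwin j hj).1.le, neg_nonpos]
      exact Nat.cast_nonneg _
    · rw [← Finset.filter_true_of_mem fun k hk => (hPwin k hk).2,
        sum_particles_filter_le_invDegree hN hM hNM,
        invDegree_of_ge hM le_rfl, Nat.cast_zero, neg_zero]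
  have hcost : sbar * #{k ∈ P | k ∉ A} ≤ ∑ k ∈ P, if k ∉ A then p k + q k else 0 := by
    rw [← Finset.sum_filter, mul_comm, ← nsmul_eq_mul]
    exact Finset.card_nsmul_le_sum _ _ _ fun k hk => hlow k ((hP k).1 (Finset.mem_filter.1 hk).1)
  have hcard : (#P : ℝ) = 2 * #{k ∈ P | k ∉ A} + 1 := by exact_mod_cast card_particles hN hM
  rw [Gflip, finsum_add_shift_mul_eq_sum (fun k hk => (hP k).2 fun h => hk (hrate0 k h).1)
    (fun k hk => (hP k).2 fun h => hk (hrate0 k h).2), Finset.sum_congr rfl fun k hk =>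
      flip_contribution_heightOf hA hAc ((mem_particles hN hM).1 hk) (p k) (q k),
    Finset.sum_sub_distrib, hcard]
  linarith

end SpinFlip

theorem Gexcl_heightOf {b : ℤ} {A : Set ℤ} {N M : ℤ} (hb : b = 0 ∨ b = 1)
    (hN : ∀ k ≤ N, k ∉ A) (hM : ∀ k, M ≤ k → k ∈ A) (bp bm : ℤ → ℝ) :
    Gexcl bp bm (heightOf b A) = (charge (itf (heightOf b A)) : ℝ) *
      ((∑ᶠ i : ℤ, if itf (heightOf b A) i = 1 then bp i else 0)
        - ∑ᶠ i : ℤ, if itf (heightOf b A) i = -1 then bm i else 0) := by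
  have hA := bddBelow_of_forall_le_notMem hN
  have hAc := bddAbove_compl_of_forall_le_mem hM
  set fp : ℤ → ℝ := fun i => if itf (heightOf b A) i = 1 then bp i else 0
  set fm : ℤ → ℝ := fun i => if itf (heightOf b A) i = -1 then bm i else 0
  have hfin : ∀ f : ℤ → ℝ, (∀ i, itf (heightOf b A) i = 0 → f i = 0) → f.HasFiniteSupport :=
    fun f hf => (particles A N M).finite_toSet.subset fun i hi =>
      support_itf_heightOf_subset hN hM fun h => hi (hf i h)
  have hterm : ∀ k : ℤ,
      ((if heightOf b A k = 0 ∧ heightOf b A (k + 1) = 1 then bp (k + 1) else 0)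
        + (if heightOf b A k = 1 ∧ heightOf b A (k + 1) = 0 then bm (k + 1) else 0))
        * ((fCD (swapAt (heightOf b A) k) : ℝ) - fCD (heightOf b A))
      = (charge (itf (heightOf b A)) : ℝ) * (fp (k + 1) - fm (k + 1)) := fun k => by
    rw [fCD_swapAt_heightOf_sub hA hAc, charge_itf_heightOf hN hM]
    simp only [fp, fm, itf, heightOf, add_sub_cancel_right]
    rcases hb with rfl | rfl <;> by_cases hk : k ∈ A <;> by_cases hk₁ : k + 1 ∈ A <;>
      simp [hk, hk₁]
  rw [Gexcl, finsum_congr hterm, ← finsum_sub_distrib (hfin fp fun i h => by simp [fp, h])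
    (hfin fm fun i h => by simp [fm, h]), mul_finsum]
  exact finsum_comp_equiv (Equiv.addRight (1 : ℤ)) (f := fun i => _ * (fp i - fm i))

theorem IsHeight.exists_eq_heightOf {x : ℤ → ℤ} (hx : IsHeight x) :
    ∃ b A N M, (b = 0 ∨ b = 1) ∧ (∀ k ≤ N, k ∉ A) ∧ (∀ k, M ≤ k → k ∈ A) ∧ x = heightOf b A := by
  obtain ⟨h01, a, b, hab, ⟨N, hN⟩, ⟨M, hM⟩⟩ := hx
  have hb : b = 0 ∨ b = 1 := hM M le_rfl ▸ h01 M
  refine ⟨b, {l | x l = b}, N, M, hb, fun k hk h => hab (hN k hk ▸ h), fun k hk => hM k hk, ?_⟩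
  funext l
  by_cases hl : x l = b
  · simp [heightOf, hl]
  · have := h01 l
    simp only [heightOf, mem_ofPred_eq, hl, if_false]
    omega

theorem drift_inequality_A4a_general
    (x : ℤ → ℤ) (hx : IsHeight x)
    (p q bp bm : ℤ → ℝ)
    (hrate0 : ∀ k, x (k - 1) = x k → p k = 0 ∧ q k = 0)
    (sbar : ℝ) (hsbar : 0 < sbar)
    (hlow : ∀ k, x (k - 1) ≠ x k → sbar ≤ p k + q k)
    (hA4a : ∀ k l : ℤ, k < l → x (k - 1) ≠ x k → x (l - 1) ≠ x l →
      (∀ m, k ≤ m → m < l → x m = x k) → q k + p l ≤ p k + q l)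
    (dbar : ℝ)
    (hdrift : (charge (itf x) : ℝ) *
        ((∑ᶠ i : ℤ, if itf x i = 1 then bp i else 0)
          - ∑ᶠ i : ℤ, if itf x i = -1 then bm i else 0)
      ≤ dbar * (pnum (itf x) : ℝ))
    (α₁ α₂ : ℝ) (hα₁ : 0 ≤ α₁) (hα₂ : 0 ≤ α₂) :
    α₁ * Gflip p q x + α₂ * Gexcl bp bm x
      ≤ α₁ * sbar - (α₁ * sbar / 2 - α₂ * dbar) * (pnum (itf x) : ℝ) := by
  obtain ⟨b, A, N, M, hb, hN, hM, rfl⟩ := hx.exists_eq_heightOf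
  have hflip := Gflip_heightOf_le hN hM hrate0 hlow hA4a
  have hexcl : Gexcl bp bm (heightOf b A) ≤ dbar * pnum (itf (heightOf b A)) :=
    (Gexcl_heightOf hb hN hM bp bm).trans_le hdrift
  rw [pnum_itf_heightOf hb hN hM] at hexcl ⊢
  push_cast at hexcl ⊢
  nlinarith [mul_le_mul_of_nonneg_left hflip hα₁, mul_le_mul_of_nonneg_left hexcl hα₂,
    mul_nonneg hα₁ hsbar.le]

/-- Lemma 3 of the paper under assumption (A4a): core drift inequality for the
inversion count. -/
theorem drift_inequality_A4a
    (x : ℤ → ℤ) (hx : IsHeight x)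
    (p q bp bm : ℤ → ℝ)
    (hp : ∀ k, 0 ≤ p k) (hq : ∀ k, 0 ≤ q k)
    (hbp : ∀ i, 0 ≤ bp i) (hbm : ∀ i, 0 ≤ bm i)
    (hrate0 : ∀ k, x (k - 1) = x k → p k = 0 ∧ q k = 0)
    (sbar : ℝ) (hsbar : 0 < sbar)
    (hlow : ∀ k, x (k - 1) ≠ x k → sbar ≤ p k + q k)
    (hup : ∀ k, p k + q k ≤ 1)
    (hA4a : ∀ k l : ℤ, k < l → x (k - 1) ≠ x k → x (l - 1) ≠ x l →
      (∀ m, k ≤ m → m < l → x m = x k) → q k + p l ≤ p k + q l)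
    (dbar : ℝ) (hdbar : 0 ≤ dbar)
    (hdrift : (charge (itf x) : ℝ) *
        ((∑ᶠ i : ℤ, if itf x i = 1 then bp i else 0)
          - ∑ᶠ i : ℤ, if itf x i = -1 then bm i else 0)
      ≤ dbar * (pnum (itf x) : ℝ))
    (α₁ α₂ : ℝ) (hα₁ : 0 ≤ α₁) (hα₂ : 0 ≤ α₂) :
    α₁ * Gflip p q x + α₂ * Gexcl bp bm x
      ≤ α₁ * sbar - (α₁ * sbar / 2 - α₂ * dbar) * (pnum (itf x) : ℝ) :=
  drift_inequality_A4a_general x hx p q bp bm hrate0 sbar hsbar hlow hA4a dbar hdrift α₁ α₂ hα₁ hα₂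
end

section
/- Width bounds on the inversion count: For every x ∈ 𝒮_hgt with interface y, one has w(y) − 2 ≤ f_CD(x) ≤ w(y)². -/
open scoped BigOperators

/-! Outside `[il, ir]` the height is constant: `A = x (il - 1)` to the left and `B = x ir` to the
right, with `A ≠ B`. Telescoping gives `ch = B - A`, hence `κ = B`. An inversion is a pair `k < l`
with `x k = B` and `x l = A`, which forces `il ≤ k < l ≤ ir - 1`; this gives the upper bound.
Since `x il = B` and `x (ir - 1) = A`, every `m ∈ [il, ir - 2]` yields an inversion, `(m, ir - 1)`
if `x m = B` and `(il, m)` otherwise, and these are pairwise distinct. -/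

section Interface

variable {x : ℤ → ℤ}

theorem sum_Ioc_itf {a b : ℤ} (hab : a ≤ b) : ∑ i ∈ Finset.Ioc a b, itf x i = x b - x a := by
  induction b, hab using Int.leInduction with
  | base => simp
  | succ b hab ih =>
    rw [← Finset.insert_Ioc_right_eq_Ioc_add_one hab, Finset.sum_insert (by simp), ih, itf,
      add_sub_cancel_right]
    ring

theorem eq_of_forall_itf_eq_zero {a b : ℤ} (hab : a ≤ b)
    (h : ∀ i, a < i → i ≤ b → itf x i = 0) : x b = x a := by
  rw [← sub_eq_zero, ← sum_Ioc_itf hab]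
  exact Finset.sum_eq_zero fun i hi => h i (Finset.mem_Ioc.1 hi).1 (Finset.mem_Ioc.1 hi).2

theorem charge_itf_eq {a b : ℤ} (hab : a ≤ b) (h : ∀ i, itf x i ≠ 0 → a < i ∧ i ≤ b) :
    charge (itf x) = x b - x a := by
  rw [charge, finsum_eq_sum_of_support_subset _ (s := Finset.Ioc a b)
    fun i hi => by simpa using h i hi, sum_Ioc_itf hab]

end Interface

section Window

variable {x : ℤ → ℤ} {il ir : ℤ}

theorem apply_eq_left_of_lt (hil : ∀ i, itf x i ≠ 0 → il ≤ i) {k : ℤ} (hk : k < il) :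
    x k = x (il - 1) :=
  (eq_of_forall_itf_eq_zero (by omega) fun i hki hi => by
    by_contra h
    have := hil i h
    omega).symm

theorem apply_eq_right_of_le (hir : ∀ i, itf x i ≠ 0 → i ≤ ir) {k : ℤ} (hk : ir ≤ k) :
    x k = x ir :=
  eq_of_forall_itf_eq_zero hk fun i hki hi => by
    by_contra h
    have := hir i h
    omega

theorem IsHeight.left_ne_right (hx : IsHeight x) (hil : ∀ i, itf x i ≠ 0 → il ≤ i)
    (hir : ∀ i, itf x i ≠ 0 → i ≤ ir) : x (il - 1) ≠ x ir := by
  obtain ⟨-, a, b, hab, ⟨N, hN⟩, ⟨M, hM⟩⟩ := hx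
  rwa [← apply_eq_left_of_lt hil (min_lt_of_right_lt (sub_one_lt il) : min N (il - 1) < il),
    hN _ (min_le_left _ _), ← apply_eq_right_of_le hir (le_max_right M ir), hM _ (le_max_left _ _)]

theorem IsHeight.kappa_eq (hx : IsHeight x) (hil : ∀ i, itf x i ≠ 0 → il ≤ i)
    (hir : ∀ i, itf x i ≠ 0 → i ≤ ir) : kappa x = x ir := by
  have hne := hx.left_ne_right hil hir
  have hle : il - 1 ≤ ir := by
    by_contra h
    exact hne (apply_eq_right_of_le hir (by omega))
  have hch := charge_itf_eq hle fun i hi => ⟨by linarith [hil i hi], hir i hi⟩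
  have := hx.1 ir
  have := hx.1 (il - 1)
  rw [kappa, hch]
  omega

theorem IsHeight.one_sub_kappa_eq (hx : IsHeight x) (hil : ∀ i, itf x i ≠ 0 → il ≤ i)
    (hir : ∀ i, itf x i ≠ 0 → i ≤ ir) : 1 - kappa x = x (il - 1) := by
  have := hx.left_ne_right hil hir
  have := hx.1 ir
  have := hx.1 (il - 1)
  rw [hx.kappa_eq hil hir]
  omega

theorem IsHeight.eq_kappa_or_eq_one_sub_kappa (hx : IsHeight x) (hil : ∀ i, itf x i ≠ 0 → il ≤ i)
    (hir : ∀ i, itf x i ≠ 0 → i ≤ ir) (m : ℤ) : x m = kappa x ∨ x m = 1 - kappa x := by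
  have := hx.1 m
  have := hx.1 ir
  rw [hx.kappa_eq hil hir]
  omega

theorem IsHeight.le_of_eq_kappa (hx : IsHeight x) (hil : ∀ i, itf x i ≠ 0 → il ≤ i)
    (hir : ∀ i, itf x i ≠ 0 → i ≤ ir) {k : ℤ} (hk : x k = kappa x) : il ≤ k := by
  by_contra h
  exact hx.left_ne_right hil hir
    (by rw [← apply_eq_left_of_lt hil (not_le.1 h), hk, hx.kappa_eq hil hir])

theorem IsHeight.le_of_eq_one_sub_kappa (hx : IsHeight x) (hil : ∀ i, itf x i ≠ 0 → il ≤ i)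
    (hir : ∀ i, itf x i ≠ 0 → i ≤ ir) {l : ℤ} (hl : x l = 1 - kappa x) : l ≤ ir - 1 := by
  by_contra h
  exact hx.left_ne_right hil hir
    (by rw [← hx.one_sub_kappa_eq hil hir, ← hl, apply_eq_right_of_le hir (by omega)])

theorem IsHeight.apply_eq_kappa (hx : IsHeight x) (hil : ∀ i, itf x i ≠ 0 → il ≤ i)
    (hir : ∀ i, itf x i ≠ 0 → i ≤ ir) (h : itf x il ≠ 0) : x il = kappa x :=
  (hx.eq_kappa_or_eq_one_sub_kappa hil hir il).resolve_right fun hl =>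
    h (by rw [itf, hl, hx.one_sub_kappa_eq hil hir, sub_self])

theorem IsHeight.apply_sub_one_eq_one_sub_kappa (hx : IsHeight x)
    (hil : ∀ i, itf x i ≠ 0 → il ≤ i) (hir : ∀ i, itf x i ≠ 0 → i ≤ ir) (h : itf x ir ≠ 0) :
    x (ir - 1) = 1 - kappa x :=
  (hx.eq_kappa_or_eq_one_sub_kappa hil hir (ir - 1)).resolve_left fun hr =>
    h (by rw [itf, hr, hx.kappa_eq hil hir, sub_self])

end Window

def inversionSet (x : ℤ → ℤ) (c d : ℤ) : Set (ℤ × ℤ) :=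
  {p | p.1 < p.2 ∧ x p.1 = c ∧ x p.2 = d}

theorem fCD_eq_card_inversionSet (x : ℤ → ℤ) :
    fCD x = Nat.card (inversionSet x (kappa x) (1 - kappa x)) :=
  rfl

section Inversions

variable {x : ℤ → ℤ} {a b c d : ℤ}

theorem inversionSet_subset (hc : ∀ k, x k = c → a ≤ k) (hd : ∀ l, x l = d → l ≤ b) :
    inversionSet x c d ⊆ ↑(Finset.Icc a b ×ˢ Finset.Icc a b) := by
  rintro ⟨k, l⟩ ⟨hkl, hk, hl⟩
  have := hc k hk
  have := hd l hl
  simp only [Finset.coe_product, Finset.coe_Icc, Set.mem_prod, Set.mem_Icc]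
  omega

theorem card_inversionSet_le (hc : ∀ k, x k = c → a ≤ k) (hd : ∀ l, x l = d → l ≤ b) :
    (Nat.card (inversionSet x c d) : ℤ) ≤ (b - a + 1) ^ 2 := by
  have hcard := Set.ncard_le_ncard (inversionSet_subset hc hd) (Finset.finite_toSet _)
  rw [Set.ncard_coe_finset, Finset.card_product, Int.card_Icc, ← Nat.card_coe_set_eq] at hcard
  calc (Nat.card (inversionSet x c d) : ℤ) ≤ (b + 1 - a).toNat ^ 2 := by
        exact_mod_cast hcard.trans_eq (sq _).symm
    _ ≤ (b - a + 1) ^ 2 := by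
        rcases le_total 0 (b + 1 - a) with h | h
        · rw [Int.toNat_of_nonneg h]
          exact le_of_eq (by ring)
        · rw [Int.toNat_of_nonpos h]
          positivity

theorem le_card_inversionSet (hfin : (inversionSet x c d).Finite) (ha : x a = c) (hb : x b = d)
    (hcd : ∀ m, a < m → m < b → x m = c ∨ x m = d) :
    b - a ≤ Nat.card (inversionSet x c d) := by
  classical
  let f : ℤ → ℤ × ℤ := fun m => if x m = c then (m, b) else (a, m)
  have hmaps : ∀ m ∈ (↑(Finset.Ico a b) : Set ℤ), f m ∈ inversionSet x c d := by
    intro m hm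
    rw [Finset.coe_Ico, Set.mem_Ico] at hm
    by_cases hm' : x m = c
    · simp only [f, if_pos hm']
      exact ⟨hm.2, hm', hb⟩
    · have ham : a < m := lt_of_le_of_ne hm.1 (by rintro rfl; exact hm' ha)
      simp only [f, if_neg hm']
      exact ⟨ham, ha, (hcd m ham hm.2).resolve_left hm'⟩
  have hinj : Set.InjOn f (↑(Finset.Ico a b)) := by
    intro m hm m' hm' hmm'
    rw [Finset.coe_Ico, Set.mem_Ico] at hm hm'
    by_cases h : x m = c <;> by_cases h' : x m' = c <;>
      simp only [f, h, h', if_true, if_false, Prod.mk.injEq] at hmm' <;> omega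
  have := Set.ncard_le_ncard_of_injOn f hmaps hinj hfin
  rw [Set.ncard_coe_finset, Int.card_Ico, ← Nat.card_coe_set_eq] at this
  omega

end Inversions

/-- Width bounds on the inversion count: `w(y) − 2 ≤ f_CD(x) ≤ w(y)²`. -/
theorem fCD_width_bounds
    (x : ℤ → ℤ) (hx : IsHeight x)
    (il ir : ℤ)
    (hil : itf x il ≠ 0 ∧ ∀ i, itf x i ≠ 0 → il ≤ i)
    (hir : itf x ir ≠ 0 ∧ ∀ i, itf x i ≠ 0 → i ≤ ir) :
    (ir - il + 1) - 2 ≤ (fCD x : ℤ) ∧ (fCD x : ℤ) ≤ (ir - il + 1) ^ 2 := by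
  have hc : ∀ k, x k = kappa x → il ≤ k := fun _ => hx.le_of_eq_kappa hil.2 hir.2
  have hd : ∀ l, x l = 1 - kappa x → l ≤ ir - 1 := fun _ => hx.le_of_eq_one_sub_kappa hil.2 hir.2
  rw [fCD_eq_card_inversionSet]
  constructor
  · have := le_card_inversionSet ((Finset.finite_toSet _).subset (inversionSet_subset hc hd))
      (hx.apply_eq_kappa hil.2 hir.2 hil.1) (hx.apply_sub_one_eq_one_sub_kappa hil.2 hir.2 hir.1)
      fun m _ _ => hx.eq_kappa_or_eq_one_sub_kappa hil.2 hir.2 m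
    omega
  · nlinarith [card_inversionSet_le hc hd, hil.2 ir hir.1]
end

section
/- All moments of the dominating width variable are finite (the probabilistic core of Proposition 2): Let K > 0, let w₀ be a positive integer, and let (U_n)_{n≥1} be independent random variables with U_n exponentially distributed with mean 1/(K(w₀+n)). For t > 0 define τ(t) = inf{n ≥ 1 : U₁ + ⋯ + U_n ≥ t} and Q(t) = w₀ + τ(t). Then τ(t) is almost surely finite and E[Q(t)^r] < ∞ for every real r > 0 and every t > 0. -/
/-!
Write `S n = U₁ + ⋯ + U_n` and `ρ_j = K (w₀ + j)`. For `θ ≥ 0` the Chernoff bound gives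
`P(S n ≤ t) ≤ exp (θ t) ∏_{j ≤ n} ρ_j / (ρ_j + θ)`. Taking `θ = K L` with `L ∈ ℕ`, the product
telescopes to `∏_{i < L} (w₀ + 1 + i) / (w₀ + 1 + n + i) ≤ ((w₀ + 1 + L) / (w₀ + 1 + n)) ^ L`,
so `P(S n ≤ t)` decays like `n ^ (-L)` for every `L`. As `{τ = n + 1} ⊆ {S n ≤ t}`, the law of
`τ` has polynomial tails of every order, whence all moments are finite; the case `L = 1`
already gives `P(τ = ∞) ≤ inf_n P(S n ≤ t) = 0`.
-/

open MeasureTheory ProbabilityTheory Real Finset Filter Topology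

namespace ProbabilityTheory

lemma ae_nonneg_expMeasure (ρ : ℝ) : ∀ᵐ x ∂expMeasure ρ, 0 ≤ x := by
  simp only [ae_iff, not_le]
  change gammaMeasure 1 ρ (Set.Iio 0) = 0
  rw [gammaMeasure, withDensity_apply _ measurableSet_Iio]
  exact lintegral_gammaPDF_of_nonpos le_rfl

lemma mgf_id_expMeasure {ρ s : ℝ} (hρ : 0 < ρ) (hs : s < ρ) :
    mgf id (expMeasure ρ) s = ρ / (ρ - s) := by
  have hdensity : ∀ x, (exponentialPDF ρ x).toReal • exp (s * id x)
      = (Set.Ici 0).indicator (fun x => ρ * exp ((s - ρ) * x)) x := by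
    intro x
    rw [exponentialPDF, ENNReal.toReal_ofReal (exponentialPDFReal_nonneg hρ x), exponentialPDFReal,
      gammaPDFReal]
    by_cases hx : 0 ≤ x
    · simp only [hx, if_true, rpow_one, Gamma_one, div_one, sub_self, rpow_zero, mul_one,
        Set.indicator_of_mem (Set.mem_Ici.2 hx), id, smul_eq_mul, mul_assoc, ← exp_add]
      ring_nf
    · simp [hx]
  change ∫ x, exp (s * id x) ∂volume.withDensity (exponentialPDF ρ) = _
  rw [integral_withDensity_eq_integral_toReal_smul (f := exponentialPDF ρ)
    (by unfold exponentialPDF; fun_prop) (.of_forall fun _ => ENNReal.ofReal_lt_top)]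
  simp_rw [hdensity]
  rw [integral_indicator measurableSet_Ici, integral_Ici_eq_integral_Ioi, integral_const_mul,
    integral_exp_mul_Ioi (by linarith), mul_zero, exp_zero, neg_div, ← div_neg, neg_sub,
    mul_one_div]

variable {Ω ι : Type*} [MeasurableSpace Ω] {μ : Measure Ω}

lemma aemeasurable_of_map_eq_expMeasure {X : Ω → ℝ} {ρ : ℝ} (hρ : 0 < ρ)
    (hX : μ.map X = expMeasure ρ) : AEMeasurable X μ :=
  have := isProbabilityMeasure_expMeasure hρ
  aemeasurable_of_map_neZero (hX ▸ inferInstance)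

lemma ae_nonneg_of_map_eq_expMeasure {X : Ω → ℝ} {ρ : ℝ} (hρ : 0 < ρ)
    (hX : μ.map X = expMeasure ρ) : ∀ᵐ ω ∂μ, 0 ≤ X ω :=
  ae_of_ae_map (aemeasurable_of_map_eq_expMeasure hρ hX) (hX ▸ ae_nonneg_expMeasure ρ)

lemma mgf_of_map_eq_expMeasure {X : Ω → ℝ} {ρ s : ℝ} (hρ : 0 < ρ) (hs : s < ρ)
    (hX : μ.map X = expMeasure ρ) : mgf X μ s = ρ / (ρ - s) := by
  rw [← mgf_id_map (aemeasurable_of_map_eq_expMeasure hρ hX), hX, mgf_id_expMeasure hρ hs]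

lemma measureReal_sum_le_le_of_expMeasure [IsProbabilityMeasure μ] {X : ι → Ω → ℝ}
    (hind : iIndepFun X μ) {ρ : ι → ℝ} (hρ : ∀ i, 0 < ρ i)
    (hlaw : ∀ i, μ.map (X i) = expMeasure (ρ i)) (s : Finset ι) (ε : ℝ) {θ : ℝ} (hθ : 0 ≤ θ) :
    μ.real {ω | ∑ i ∈ s, X i ω ≤ ε} ≤ exp (θ * ε) * ∏ i ∈ s, ρ i / (ρ i + θ) := by
  have hmeas i := aemeasurable_of_map_eq_expMeasure (hρ i) (hlaw i)
  have hsum_nonneg : ∀ᵐ ω ∂μ, 0 ≤ ∑ i ∈ s, X i ω := by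
    filter_upwards [(eventually_all_finset s).2 fun i _ =>
      ae_nonneg_of_map_eq_expMeasure (hρ i) (hlaw i)] with ω hω
    exact sum_nonneg hω
  have hint : Integrable (fun ω => exp (-θ * (∑ i ∈ s, X i) ω)) μ := by
    refine Integrable.of_bound (C := 1) ?_ ?_
    · have := Finset.aemeasurable_sum s fun i _ => hmeas i
      fun_prop
    · filter_upwards [hsum_nonneg] with ω hω
      rw [norm_of_nonneg (exp_nonneg _), exp_le_one_iff, Finset.sum_apply]
      nlinarith
  have hmgf i : mgf (X i) μ (-θ) = ρ i / (ρ i + θ) := by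
    rw [mgf_of_map_eq_expMeasure (hρ i) (by linarith [hρ i]) (hlaw i), sub_neg_eq_add]
  have hchernoff := measure_le_le_exp_mul_mgf ε (neg_nonpos.2 hθ) hint
  rw [hind.mgf_sum₀ hmeas, neg_neg] at hchernoff
  simpa only [Finset.sum_apply, hmgf] using hchernoff

end ProbabilityTheory

namespace Finset

lemma prod_range_div_add_eq (c : ℝ) (hc : 0 < c) (L n : ℕ) :
    ∏ j ∈ range n, (c + j) / (c + j + L) = ∏ i ∈ range L, (c + i) / (c + n + i) := by
  have hsplit (a b : ℕ) : ∏ m ∈ range (a + b), (c + m)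
      = (∏ i ∈ range a, (c + i)) * ∏ j ∈ range b, (c + a + j) := by
    rw [prod_range_add]
    push_cast
    simp only [add_assoc]
  have hpos (a b : ℕ) : ∏ i ∈ range a, (c + b + i) ≠ 0 :=
    (prod_pos fun i _ => by positivity).ne'
  simp_rw [add_right_comm c _ (L : ℝ)]
  rw [prod_div_distrib, prod_div_distrib, div_eq_div_iff (hpos n L) (hpos L n), ← hsplit,
    ← hsplit, add_comm]

lemma prod_range_div_add_le (c : ℝ) (hc : 0 < c) (L n : ℕ) :
    ∏ j ∈ range n, (c + j) / (c + j + L) ≤ (c + L) ^ L / (c + n) ^ L := by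
  calc ∏ j ∈ range n, (c + j) / (c + j + L)
      = ∏ i ∈ range L, (c + i) / (c + n + i) := prod_range_div_add_eq c hc L n
    _ ≤ ∏ _i ∈ range L, (c + L) / (c + n) := by
      refine prod_le_prod (fun i _ => by positivity) fun i hi => ?_
      have hiL : (i : ℝ) ≤ L := by exact_mod_cast (mem_range.1 hi).le
      exact div_le_div₀ (by positivity) (by linarith) (by positivity)
        (le_add_of_nonneg_right i.cast_nonneg)
    _ = (c + L) ^ L / (c + n) ^ L := by rw [prod_const, card_range, div_pow]

end Finset

lemma Nat.sInf_setOf_eq_iff {p : ℕ → Prop} {n : ℕ} :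
    sInf {m | p m} = n ↔ (p n ∧ ∀ m < n, ¬p m) ∨ (n = 0 ∧ ∀ m, ¬p m) := by
  constructor
  · rintro rfl
    by_cases hp : ∃ m, p m
    · exact .inl ⟨Nat.sInf_mem hp, fun m hm => Nat.notMem_of_lt_sInf hm⟩
    · push Not at hp
      exact .inr ⟨by simp [hp], hp⟩
  · rintro (⟨hn, hmin⟩ | ⟨rfl, hp⟩)
    · exact le_antisymm (Nat.sInf_le hn) (not_lt.1 fun h => hmin _ h (Nat.sInf_mem ⟨n, hn⟩))
    · simp [hp]

section

variable {Ω : Type*} [MeasurableSpace Ω] {μ : Measure Ω}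

lemma measurable_sInf_setOf {p : ℕ → Ω → Prop}
    (hp : ∀ n, MeasurableSet {ω | p n ω}) : Measurable fun ω => sInf {n | p n ω} := by
  refine measurable_to_countable' fun n => ?_
  simp only [Set.preimage, Set.mem_singleton_iff, Nat.sInf_setOf_eq_iff]
  simp only [measurableSet_setOfPred] at hp ⊢
  fun_prop

lemma integrable_comp_of_summable_measureReal {E : Type*} [NormedAddCommGroup E]
    [IsFiniteMeasure μ] {τ : Ω → ℕ} (hτ : AEMeasurable τ μ) {g : ℕ → E}
    (hg : Summable fun n => μ.real (τ ⁻¹' {n}) * ‖g n‖) : Integrable (fun ω => g (τ ω)) μ := by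
  change Integrable (g ∘ τ) μ
  rw [← integrable_map_measure AEStronglyMeasurable.of_discrete hτ,
    ← (μ.map τ).sum_smul_dirac]
  refine integrable_sum_dirac (fun _ => measure_ne_top _ _) ?_
  simpa [Measure.map_apply_of_aemeasurable hτ (measurableSet_singleton _), measureReal_def] using hg

lemma aemeasurable_sInf_setOf {p : ℕ → Ω → Prop}
    (hp : ∀ n, NullMeasurableSet {ω | p n ω} μ) : AEMeasurable (fun ω => sInf {n | p n ω}) μ :=
  NullMeasurable.aemeasurable (measurable_sInf_setOf hp)

lemma integrable_add_rpow_of_measureReal_preimage_succ_le [IsFiniteMeasure μ] {τ : Ω → ℕ}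
    (hτ : AEMeasurable τ μ) {a C r : ℝ} {L : ℕ} (ha : 0 ≤ a) (hL : r + 1 < L)
    (htail : ∀ n : ℕ, μ.real (τ ⁻¹' {n + 1}) ≤ C / (a + 1 + n) ^ L) :
    Integrable (fun ω => (a + τ ω) ^ r) μ := by
  refine integrable_comp_of_summable_measureReal (g := fun n : ℕ => (a + n) ^ r) hτ ?_
  rw [← summable_nat_add_iff 1]
  have hdecay := ((Real.summable_one_div_nat_add_rpow (a + 1) (L - r)).2 (by linarith)).mul_left C
  refine hdecay.of_nonneg_of_le (fun n => by positivity) fun n => ?_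
  have hpos : 0 < a + 1 + n := by positivity
  calc μ.real (τ ⁻¹' {n + 1}) * ‖(a + (n + 1 : ℕ)) ^ r‖
      = μ.real (τ ⁻¹' {n + 1}) * (a + 1 + n) ^ r := by
        rw [norm_of_nonneg (by positivity)]; push_cast; ring_nf
    _ ≤ C / (a + 1 + n) ^ L * (a + 1 + n) ^ r := by gcongr; exact htail n
    _ = C * (1 / |n + (a + 1)| ^ ((L : ℝ) - r)) := by
        rw [abs_of_pos (by linarith), rpow_sub (by linarith), rpow_natCast]
        field_simp
        ring_nf

lemma sum_Icc_le_of_notMem {x : ℕ → ℝ} {t : ℝ} (ht : 0 ≤ t) {n : ℕ}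
    (h : n ∉ {m | 1 ≤ m ∧ t ≤ ∑ j ∈ Icc 1 m, x j}) : ∑ j ∈ Icc 1 n, x j ≤ t := by
  rcases n.eq_zero_or_pos with rfl | hn
  · simpa using ht
  · exact (not_le.1 fun h' => h ⟨hn, h'⟩).le

variable {K : ℝ} {w₀ : ℕ} {U : ℕ → Ω → ℝ}

lemma aemeasurable_sum_Icc (hK : 0 < K)
    (hlaw : ∀ n : ℕ, 1 ≤ n → Measure.map (U n) μ = expMeasure (K * ((w₀ : ℝ) + n))) (n : ℕ) :
    AEMeasurable (fun ω => ∑ j ∈ Icc 1 n, U j ω) μ :=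
  aemeasurable_fun_sum _ fun j hj => aemeasurable_of_map_eq_expMeasure
    (mul_pos hK (by have := (mem_Icc.1 hj).1; positivity)) (hlaw j (mem_Icc.1 hj).1)

lemma measureReal_sum_Icc_le_le [IsProbabilityMeasure μ] (hK : 0 < K) (hind : iIndepFun U μ)
    (hlaw : ∀ n : ℕ, 1 ≤ n → Measure.map (U n) μ = expMeasure (K * ((w₀ : ℝ) + n)))
    (t : ℝ) (L n : ℕ) :
    μ.real {ω | ∑ j ∈ Icc 1 n, U j ω ≤ t}
      ≤ exp (K * L * t) * (w₀ + 1 + L) ^ L / (w₀ + 1 + n) ^ L := by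
  have hshift ω : ∑ j ∈ Icc 1 n, U j ω = ∑ j ∈ range n, U (j + 1) ω := by
    rw [range_eq_Ico, sum_Ico_add' (U · ω) 0 n 1, zero_add, Ico_add_one_right_eq_Icc]
  have hratio (j : ℕ) : K * ((w₀ : ℝ) + (j + 1 : ℕ)) / (K * ((w₀ : ℝ) + (j + 1 : ℕ)) + K * L)
      = (w₀ + 1 + j) / (w₀ + 1 + j + L) := by
    push_cast
    field_simp
    ring
  have hchernoff := measureReal_sum_le_le_of_expMeasure (hind.precomp (add_left_injective 1))
    (fun j => by positivity) (fun j => hlaw (j + 1) (by omega)) (range n) t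
    (θ := K * L) (by positivity)
  simp only [hratio] at hchernoff
  simp only [hshift]
  calc _ ≤ _ := hchernoff
    _ ≤ exp (K * L * t) * ((w₀ + 1 + L) ^ L / (w₀ + 1 + n) ^ L) := by
      gcongr
      exact prod_range_div_add_le _ (by positivity) L n
    _ = _ := by ring

lemma tendsto_measureReal_sum_Icc_le [IsProbabilityMeasure μ] (hK : 0 < K) (hind : iIndepFun U μ)
    (hlaw : ∀ n : ℕ, 1 ≤ n → Measure.map (U n) μ = expMeasure (K * ((w₀ : ℝ) + n))) (t : ℝ) :
    Tendsto (fun n => μ.real {ω | ∑ j ∈ Icc 1 n, U j ω ≤ t}) atTop (𝓝 0) := by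
  have hden : Tendsto (fun n : ℕ => ((w₀ : ℝ) + 1 + n) ^ 1) atTop atTop := by
    simpa using tendsto_atTop_add_const_left _ _ tendsto_natCast_atTop_atTop
  exact squeeze_zero (fun _ => measureReal_nonneg) (measureReal_sum_Icc_le_le hK hind hlaw t 1)
    (tendsto_const_nhds.div_atTop hden)

end

theorem dominating_width_all_moments_finite_general
    {Ω : Type*} [MeasurableSpace Ω] (μ : Measure Ω) [IsProbabilityMeasure μ]
    (K : ℝ) (hK : 0 < K) (w₀ : ℕ)
    (U : ℕ → Ω → ℝ)
    (hind : iIndepFun U μ)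
    (hlaw : ∀ n : ℕ, 1 ≤ n → Measure.map (U n) μ = expMeasure (K * ((w₀ : ℝ) + n)))
    (t : ℝ) (ht : 0 < t) :
    (∀ᵐ ω ∂μ, ∃ n : ℕ, 1 ≤ n ∧ t ≤ ∑ j ∈ Finset.Icc 1 n, U j ω) ∧
    ∀ r : ℝ, 0 < r →
      Integrable
        (fun ω =>
          ((w₀ : ℝ) +
            (sInf {n : ℕ | 1 ≤ n ∧ t ≤ ∑ j ∈ Finset.Icc 1 n, U j ω} : ℕ)) ^ r) μ := by
  constructor
  · rw [ae_iff, ← measureReal_eq_zero_iff]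
    refine le_antisymm (ge_of_tendsto' (tendsto_measureReal_sum_Icc_le hK hind hlaw t)
      fun n => measureReal_mono fun ω hω => ?_) measureReal_nonneg
    exact sum_Icc_le_of_notMem ht.le (not_exists.1 hω n)
  · intro r _
    obtain ⟨L, hL⟩ := exists_nat_gt (r + 1)
    have hτ : AEMeasurable (fun ω => sInf {n : ℕ | 1 ≤ n ∧ t ≤ ∑ j ∈ Icc 1 n, U j ω}) μ :=
      aemeasurable_sInf_setOf fun n => (MeasurableSet.const (1 ≤ n)).nullMeasurableSet.inter
        (nullMeasurableSet_le aemeasurable_const (aemeasurable_sum_Icc hK hlaw n))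
    refine integrable_add_rpow_of_measureReal_preimage_succ_le hτ w₀.cast_nonneg hL fun n =>
      (measureReal_mono fun ω hω => sum_Icc_le_of_notMem ht.le ?_).trans
        (measureReal_sum_Icc_le_le hK hind hlaw t L n)
    exact Nat.notMem_of_lt_sInf (Eq.symm hω).le

/-- All moments of the dominating width variable are finite: with `U n`
independent exponentials of mean `1/(K(w₀+n))` (for `n ≥ 1`), the hitting index
`τ(t) = inf{n ≥ 1 : U₁ + ⋯ + U_n ≥ t}` is almost surely finite, and
`Q(t) = w₀ + τ(t)` has finite `r`-th moment for every `r > 0`. -/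
theorem dominating_width_all_moments_finite
    {Ω : Type*} [MeasurableSpace Ω] (μ : Measure Ω) [IsProbabilityMeasure μ]
    (K : ℝ) (hK : 0 < K) (w₀ : ℕ) (hw₀ : 1 ≤ w₀)
    (U : ℕ → Ω → ℝ)
    (hind : iIndepFun U μ)
    (hlaw : ∀ n : ℕ, 1 ≤ n → Measure.map (U n) μ = expMeasure (K * ((w₀ : ℝ) + n)))
    (t : ℝ) (ht : 0 < t) :
    (∀ᵐ ω ∂μ, ∃ n : ℕ, 1 ≤ n ∧ t ≤ ∑ j ∈ Finset.Icc 1 n, U j ω) ∧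
    ∀ r : ℝ, 0 < r →
      Integrable
        (fun ω =>
          ((w₀ : ℝ) +
            (sInf {n : ℕ | 1 ≤ n ∧ t ≤ ∑ j ∈ Finset.Icc 1 n, U j ω} : ℕ)) ^ r) μ :=
  dominating_width_all_moments_finite_general μ K hK w₀ U hind hlaw t ht
end

section
/- A rate function satisfying the divergence condition (A2)(a) but violating the linear-growth condition (A2)(b): Define ι(x) = x(1+2^x) for x ∈ ℕ, let x₀ = 2 and x_{j+1} = ι(x_j) for j ≥ 0, and define B(N) = x_j · 2^{x_j} for all integers N with x_j ≤ N < x_{j+1}. Then Σ_{N≥2} 1/B(N) = ∞ (the sum of 1/B(N) over each block [x_j, x_{j+1}) equals 1), while B(x_j)/x_j² = 2^{x_j}/x_j → ∞ as j → ∞; in particular limsup_{N→∞} B(N)/N² = ∞. -/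
open Filter Finset

/-! Each block `[x_j, x_{j+1})` has exactly `x_j · 2^{x_j}` elements, on which `B` is the constant
`x_j · 2^{x_j}`, so every block contributes `1` to `Σ 1/B(N)`; the partial sums of a convergent
series cannot keep growing by `1` along indices tending to infinity. On the other hand
`B(x_j)/x_j² = 2^{x_j}/x_j`, which tends to infinity because `x_j` does. -/

theorem not_summable_of_sum_Ico_eq {G : Type*} [AddCommGroup G] [TopologicalSpace G]
    [IsTopologicalAddGroup G] [T2Space G] {f : ℕ → G} {a : ℕ → ℕ} {c : G} (hc : c ≠ 0)
    (ha : Monotone a) (ha_top : Tendsto a atTop atTop)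
    (hf : ∀ j, ∑ N ∈ Ico (a j) (a (j + 1)), f N = c) : ¬ Summable f := by
  rintro ⟨s, hs⟩
  have hpartial := hs.tendsto_sum_nat
  have hdiff := (hpartial.comp (ha_top.comp (tendsto_add_atTop_nat 1))).sub (hpartial.comp ha_top)
  rw [sub_self] at hdiff
  refine hc (tendsto_nhds_unique tendsto_const_nhds (hdiff.congr fun j => ?_))
  simp only [Function.comp_apply, ← sum_Ico_eq_sub _ (ha j.le_succ), hf]

theorem tendsto_two_pow_div_self_atTop :
    Tendsto (fun n : ℕ => (2 : ℝ) ^ n / n) atTop atTop := by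
  have hpos : ∀ᶠ n : ℕ in atTop, (n : ℝ) ^ 1 / 2 ^ n ∈ Set.Ioi 0 :=
    (eventually_gt_atTop 0).mono fun n hn => by simp only [Set.mem_Ioi]; positivity
  refine (tendsto_nhdsWithin_iff.2 ⟨tendsto_pow_const_div_const_pow_of_one_lt 1 one_lt_two,
    hpos⟩).inv_tendsto_nhdsGT_zero.congr fun n => ?_
  simp

section BlockSequence

variable {x : ℕ → ℕ} (hrec : ∀ j, x (j + 1) = x j * (1 + 2 ^ x j))
include hrec

theorem block_length_eq (j : ℕ) : x (j + 1) - x j = x j * 2 ^ x j := by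
  rw [hrec j, mul_add, mul_one, Nat.add_sub_cancel_left]

theorem pos_of_rec (h0 : 0 < x 0) (j : ℕ) : 0 < x j := by
  induction j with
  | zero => exact h0
  | succ j ih => rw [hrec j]; positivity

theorem strictMono_of_rec (h0 : 0 < x 0) : StrictMono x :=
  strictMono_nat_of_lt_succ fun j => by
    have hlen := block_length_eq hrec j
    have : 0 < x j * 2 ^ x j := by have := pos_of_rec hrec h0 j; positivity
    omega

theorem sum_Ico_one_div_eq_one {B : ℕ → ℝ} (j : ℕ) (hj : 0 < x j)
    (hB : ∀ N, x j ≤ N → N < x (j + 1) → B N = (x j : ℝ) * 2 ^ x j) :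
    ∑ N ∈ Ico (x j) (x (j + 1)), 1 / B N = 1 := by
  rw [sum_congr rfl fun N hN => by rw [hB N (mem_Ico.1 hN).1 (mem_Ico.1 hN).2], sum_const,
    Nat.card_Ico, block_length_eq hrec, nsmul_eq_mul]
  have : (x j : ℝ) * 2 ^ x j ≠ 0 := by positivity
  push_cast
  exact mul_one_div_cancel this

end BlockSequence

/-- A rate function satisfying the divergence condition (A2)(a) but violating
the linear-growth condition (A2)(b): with `ι(x) = x(1+2^x)`, `x₀ = 2`,
`x_{j+1} = ι(x_j)` and `B(N) = x_j·2^{x_j}` for `x_j ≤ N < x_{j+1}`, the sum of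
`1/B(N)` over each block equals `1` (so `Σ_{N≥2} 1/B(N) = ∞`), while
`B(x_j)/x_j² = 2^{x_j}/x_j → ∞`; in particular `limsup_N B(N)/N² = ∞`. -/
theorem rate_function_A2a_not_A2b
    (xs : ℕ → ℕ) (hxs0 : xs 0 = 2)
    (hxsrec : ∀ j, xs (j + 1) = xs j * (1 + 2 ^ xs j))
    (B : ℕ → ℝ)
    (hB : ∀ j N, xs j ≤ N → N < xs (j + 1) → B N = (xs j : ℝ) * 2 ^ xs j) :
    (∀ j, ∑ N ∈ Finset.Ico (xs j) (xs (j + 1)), 1 / B N = 1) ∧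
    (¬ Summable fun N : ℕ => 1 / B (N + 2)) ∧
    (∀ j, B (xs j) / (xs j : ℝ) ^ 2 = 2 ^ xs j / (xs j : ℝ)) ∧
    Tendsto (fun j => B (xs j) / (xs j : ℝ) ^ 2) atTop atTop ∧
    (∀ C : ℝ, ∀ M : ℕ, ∃ N : ℕ, M ≤ N ∧ C < B N / (N : ℝ) ^ 2) := by
  have h0 : 0 < xs 0 := by omega
  have hpos := pos_of_rec hxsrec h0
  have hmono := strictMono_of_rec hxsrec h0
  have hblock j := sum_Ico_one_div_eq_one hxsrec j (hpos j) (hB j)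
  have hratio (j : ℕ) : B (xs j) / (xs j : ℝ) ^ 2 = 2 ^ xs j / (xs j : ℝ) := by
    have : (xs j : ℝ) ≠ 0 := by exact_mod_cast (hpos j).ne'
    rw [hB j (xs j) le_rfl (hmono j.lt_succ_self)]
    field_simp
  have htendsto : Tendsto (fun j => B (xs j) / (xs j : ℝ) ^ 2) atTop atTop :=
    (tendsto_two_pow_div_self_atTop.comp hmono.tendsto_atTop).congr fun j => (hratio j).symm
  refine ⟨hblock, ?_, hratio, htendsto, fun C M => ?_⟩
  · rw [summable_nat_add_iff (f := fun N => 1 / B N) 2]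
    exact not_summable_of_sum_Ico_eq one_ne_zero hmono.monotone hmono.tendsto_atTop hblock
  · obtain ⟨j, hC, hM⟩ :=
      ((htendsto.eventually_gt_atTop C).and (hmono.tendsto_atTop.eventually_ge_atTop M)).exists
    exact ⟨xs j, hM, hC⟩
end
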